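/- arXiv:1904.05961 — 2 statements merged into one kernel-verified Lean document; each statement's English description precedes it below -/
import Mathlib

section
/- Suppose μ ∈ ℝ^d attains the optimal 1-clustering cost of P, i.e., c(P,{μ}) = opt(P,1). If opt(P,1) − opt(P,2) ≤ ε' for some ε' > 0, then every p ∈ P satisfies ‖p − μ‖ ≤ (ε'/w_min)^{1/z}. (Lemma 2) -/
open scoped Classical

/-- Points of `ℝ^d` with the Euclidean norm. -/
abbrev Pt (d : ℕ) := EuclideanSpace ℝ (Fin d)

/-- Weighted clustering cost `c(P,Q) = Σ_{p∈P} w_p · (min_{q∈Q} ‖p−q‖)^z`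
(the minimum is expressed as an infimum, which agrees with the minimum
for nonempty finite `Q`). -/
noncomputable def cCost {d : ℕ} (z : ℝ) (w : Pt d → ℝ) (P Q : Finset (Pt d)) : ℝ :=
  ∑ p ∈ P, w p * (sInf ((fun q => dist p q) '' (Q : Set (Pt d)))) ^ z

/-- Optimal `k`-clustering cost `opt(P,k) = inf { c(P,Q) : |Q| = k }`. -/
noncomputable def optCost {d : ℕ} (z : ℝ) (w : Pt d → ℝ) (P : Finset (Pt d)) (k : ℕ) : ℝ :=
  sInf { r : ℝ | ∃ Q : Finset (Pt d), Q.card = k ∧ r = cCost z w P Q }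

/-!
Adding a point `p ∈ P` as a second center next to `μ` makes the cost of `p` vanish and
increases no other cost, so `w_p ‖p − μ‖^z ≤ c(P,{μ}) − c(P,{μ,p}) ≤ opt(P,1) − opt(P,2) ≤ ε'`;
dividing by `w_min ≤ w_p` and taking `z`-th roots gives the bound.
-/

open Metric

section Cost

variable {d : ℕ} {z : ℝ} {w : Pt d → ℝ} {P Q : Finset (Pt d)}

lemma cCost_eq_sum_infDist (z : ℝ) (w : Pt d → ℝ) (P Q : Finset (Pt d)) :
    cCost z w P Q = ∑ p ∈ P, w p * infDist p (Q : Set (Pt d)) ^ z := by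
  simp only [cCost, sInf_image', infDist_eq_iInf]

lemma cCost_nonneg (hw : ∀ p ∈ P, 0 ≤ w p) : 0 ≤ cCost z w P Q := by
  rw [cCost_eq_sum_infDist]
  exact Finset.sum_nonneg fun p hp => mul_nonneg (hw p hp) (Real.rpow_nonneg infDist_nonneg z)

lemma optCost_le_cCost {k : ℕ} (hw : ∀ p ∈ P, 0 ≤ w p) (hQ : Q.card = k) :
    optCost z w P k ≤ cCost z w P Q :=
  csInf_le ⟨0, by rintro _ ⟨Q', -, rfl⟩; exact cCost_nonneg hw⟩ ⟨Q, hQ, rfl⟩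

lemma cCost_insert_add_le (hz : 0 < z) (hw : ∀ p ∈ P, 0 ≤ w p) {p : Pt d} (hp : p ∈ P)
    (hQ : Q.Nonempty) :
    cCost z w P (insert p Q) + w p * infDist p (Q : Set (Pt d)) ^ z ≤ cCost z w P Q := by
  simp only [cCost_eq_sum_infDist, Finset.coe_insert]
  rw [← Finset.add_sum_erase P _ hp, ← Finset.add_sum_erase P _ hp,
    infDist_zero_of_mem (Set.mem_insert p _), Real.zero_rpow hz.ne', mul_zero, zero_add,
    add_comm]
  gcongr with q hq
  · exact hw q (Finset.mem_of_mem_erase hq)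
  · exact infDist_nonneg
  · exact infDist_le_infDist_of_subset (Set.subset_insert p _) hQ

lemma mul_dist_rpow_le_optCost_sub (hz : 0 < z) (hw : ∀ p ∈ P, 0 ≤ w p) {μ : Pt d}
    (hμ : cCost z w P {μ} = optCost z w P 1) {p : Pt d} (hp : p ∈ P) (hpμ : p ≠ μ) :
    w p * dist p μ ^ z ≤ optCost z w P 1 - optCost z w P 2 := by
  have hopt₂ : optCost z w P 2 ≤ cCost z w P (insert p {μ}) :=
    optCost_le_cCost hw (Finset.card_pair hpμ)
  have hsplit := cCost_insert_add_le hz hw hp (Finset.singleton_nonempty μ)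
  rw [Finset.coe_singleton, infDist_singleton] at hsplit
  linarith

end Cost

lemma le_div_rpow_inv_of_mul_rpow_le {x a m ε z : ℝ} (hx : 0 ≤ x) (hz : 0 < z) (hm : 0 < m)
    (hma : m ≤ a) (h : a * x ^ z ≤ ε) : x ≤ (ε / m) ^ (1 / z) := by
  have hxz : 0 ≤ x ^ z := Real.rpow_nonneg hx z
  have hmx : m * x ^ z ≤ ε := (mul_le_mul_of_nonneg_right hma hxz).trans h
  have hε : 0 ≤ ε := (mul_nonneg hm.le hxz).trans hmx
  rw [one_div, Real.le_rpow_inv_iff_of_pos hx (div_nonneg hε hm.le) hz, le_div_iff₀ hm]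
  linarith

/-- Lemma 2: if `μ` attains `opt(P,1)` and `opt(P,1) − opt(P,2) ≤ ε'`, then every `p ∈ P`
satisfies `‖p − μ‖ ≤ (ε'/w_min)^{1/z}`, where `w_min = min_{p∈P} w_p`. -/
theorem lemma2 {d : ℕ} (z : ℝ) (hz : 0 < z)
    (P : Finset (Pt d)) (hP : P.Nonempty)
    (w : Pt d → ℝ) (hw : ∀ p ∈ P, 0 < w p)
    (μ : Pt d) (hμ : cCost z w P {μ} = optCost z w P 1)
    (ε' : ℝ) (hε' : 0 < ε')
    (hgap : optCost z w P 1 - optCost z w P 2 ≤ ε') :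
    ∀ p ∈ P, dist p μ ≤ (ε' / P.inf' hP w) ^ (1 / z) := by
  intro p hp
  have hwmin_pos : 0 < P.inf' hP w := (Finset.lt_inf'_iff hP).2 hw
  rcases eq_or_ne p μ with rfl | hpμ
  · rw [dist_self]
    positivity
  · have hw₀ : ∀ q ∈ P, 0 ≤ w q := fun q hq => (hw q hq).le
    exact le_div_rpow_inv_of_mul_rpow_le dist_nonneg hz hwmin_pos (Finset.inf'_le w hp)
      ((mul_dist_rpow_le_optCost_sub hz hw₀ hμ hp hpμ).trans hgap)
end

section
/- Let ρ > 0 and k ≥ 1. Let {P̃_1,…,P̃_k} be a partition of P into nonempty clusters; for each i let μ_i ∈ ℝ^d attain opt(P̃_i,1) and let p*_i ∈ P̃_i maximize w_p·‖p−μ_i‖^z over P̃_i. Suppose there exist real numbers A and a_1,…,a_k with A ≤ Σ_{i=1}^k a_i and a_i ≤ c(P̃_i,{μ_i,p*_i}) for every i. Define ε := ρ·((Σ_{i=1}^k c(P̃_i,{μ_i}) − A)/w_min)^{1/z} (well-defined since A ≤ Σ_i a_i ≤ Σ_i c(P̃_i,{μ_i})). Then for every set X of models and every per-point cost function cost : ℝ^d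 × X → ℝ with cost(p,x) ≥ 1 for all p and x, and ρ-Lipschitz in the point argument, S = {μ_1,…,μ_k} with weights u_i := Σ_{p∈P̃_i} w_p is an ε-coreset for P w.r.t. the sum cost and an ε-coreset w.r.t. the maximum cost. (Corollary 3) -/
/-!
Adding `p*ᵢ` to the centre `μᵢ` removes at least its own term `w(p*ᵢ)‖p*ᵢ − μᵢ‖^z` from the
cost of `P̃ᵢ`, so the hypotheses on `A` and `aᵢ` bound that term, and hence, by maximality of
`p*ᵢ`, every term `w_p‖p − μᵢ‖^z` with `p ∈ P̃ᵢ`, by `D := Σᵢ c(P̃ᵢ,{μᵢ}) − A`. Dividing by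
`w_min` gives `ρ‖p − μᵢ‖ ≤ ε`, so by the Lipschitz condition `|cost(μᵢ,x) − cost(p,x)| ≤ ε`,
which is at most `ε · cost(p,x)` because costs are at least `1`. Summing, respectively
maximising, these relative bounds over the clusters gives both coreset inequalities.
-/

open scoped Classical

open Finset

section Partition

variable {α ι : Type*} [Fintype ι] {P : Finset α} {Pc : ι → Finset α}
  {w f : α → ℝ} {g : ι → ℝ} {c : ℝ}

lemma sum_eq_sum_sum_of_partition [DecidableEq α]
    (hdisj : ∀ i j, i ≠ j → Disjoint (Pc i) (Pc j))
    (hcover : P = univ.biUnion Pc) (h : α → ℝ) :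
    ∑ p ∈ P, h p = ∑ i, ∑ p ∈ Pc i, h p := by
  rw [hcover, sum_biUnion fun i _ j _ hij => hdisj i j hij]

lemma mul_sum_le_sum_clusterWeight_mul [DecidableEq α]
    (hdisj : ∀ i j, i ≠ j → Disjoint (Pc i) (Pc j))
    (hcover : P = univ.biUnion Pc) (hw : ∀ p ∈ P, 0 ≤ w p)
    (h : ∀ i, ∀ p ∈ Pc i, c * f p ≤ g i) :
    c * ∑ p ∈ P, w p * f p ≤ ∑ i, (∑ p ∈ Pc i, w p) * g i := by
  rw [sum_eq_sum_sum_of_partition hdisj hcover, mul_sum]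
  refine sum_le_sum fun i _ => ?_
  rw [mul_sum, sum_mul]
  refine sum_le_sum fun p hp => ?_
  have hwp : 0 ≤ w p := hw p (hcover ▸ mem_biUnion.2 ⟨i, mem_univ i, hp⟩)
  rw [mul_left_comm]
  exact mul_le_mul_of_nonneg_left (h i p hp) hwp

lemma sum_clusterWeight_mul_le_mul_sum [DecidableEq α]
    (hdisj : ∀ i j, i ≠ j → Disjoint (Pc i) (Pc j))
    (hcover : P = univ.biUnion Pc) (hw : ∀ p ∈ P, 0 ≤ w p)
    (h : ∀ i, ∀ p ∈ Pc i, g i ≤ c * f p) :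
    ∑ i, (∑ p ∈ Pc i, w p) * g i ≤ c * ∑ p ∈ P, w p * f p := by
  rw [sum_eq_sum_sum_of_partition hdisj hcover, mul_sum]
  refine sum_le_sum fun i _ => ?_
  rw [mul_sum, sum_mul]
  refine sum_le_sum fun p hp => ?_
  have hwp : 0 ≤ w p := hw p (hcover ▸ mem_biUnion.2 ⟨i, mem_univ i, hp⟩)
  rw [mul_left_comm]
  exact mul_le_mul_of_nonneg_left (h i p hp) hwp

lemma mul_sup'_le_sup'_of_cover (hP : P.Nonempty) (hι : (univ : Finset ι).Nonempty)
    (hcover : ∀ p ∈ P, ∃ i, p ∈ Pc i) (h : ∀ i, ∀ p ∈ Pc i, c * f p ≤ g i) :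
    c * P.sup' hP f ≤ univ.sup' hι g := by
  obtain ⟨p, hpP, hp⟩ := exists_mem_eq_sup' hP f
  obtain ⟨i, hpi⟩ := hcover p hpP
  rw [hp]
  exact (h i p hpi).trans (le_sup' g (mem_univ i))

lemma sup'_le_mul_sup'_of_subset (hP : P.Nonempty) (hι : (univ : Finset ι).Nonempty)
    (hsub : ∀ i, Pc i ⊆ P) (hne : ∀ i, (Pc i).Nonempty) (hc : 0 ≤ c)
    (h : ∀ i, ∀ p ∈ Pc i, g i ≤ c * f p) :
    univ.sup' hι g ≤ c * P.sup' hP f := by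
  refine sup'_le _ _ fun i _ => ?_
  obtain ⟨p, hp⟩ := hne i
  exact (h i p hp).trans (mul_le_mul_of_nonneg_left (le_sup' f (hsub i hp)) hc)

end Partition

lemma one_sub_mul_le_of_abs_sub_le {x y ε : ℝ} (hx : 1 ≤ x) (hε : 0 ≤ ε) (h : |y - x| ≤ ε) :
    (1 - ε) * x ≤ y := by
  nlinarith [neg_abs_le (y - x)]

lemma le_one_add_mul_of_abs_sub_le {x y ε : ℝ} (hx : 1 ≤ x) (hε : 0 ≤ ε) (h : |y - x| ≤ ε) :
    y ≤ (1 + ε) * x := by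
  nlinarith [le_abs_self (y - x)]

lemma le_div_rpow_inv_of_mul_rpow_le_s9 {z W v r D : ℝ} (hz : 0 < z) (hW : 0 < W) (hWv : W ≤ v)
    (hr : 0 ≤ r) (h : v * r ^ z ≤ D) : r ≤ (D / W) ^ (1 / z) := by
  have hrz : 0 ≤ r ^ z := Real.rpow_nonneg hr z
  have hD : r ^ z ≤ D / W := by
    rw [le_div_iff₀ hW, mul_comm]
    exact (mul_le_mul_of_nonneg_right hWv hrz).trans h
  rw [one_div, Real.le_rpow_inv_iff_of_pos hr (hrz.trans hD) hz]
  exact hD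

lemma le_sum_sub_of_le_sub {ι : Type*} [Fintype ι] {m c a : ι → ℝ} {A : ℝ}
    (hm : ∀ i, 0 ≤ m i) (h : ∀ i, m i ≤ c i - a i) (hA : A ≤ ∑ i, a i) (i : ι) :
    m i ≤ ∑ j, c j - A :=
  calc m i ≤ c i - a i := h i
    _ ≤ ∑ j, (c j - a j) := single_le_sum (fun j _ => (hm j).trans (h j)) (mem_univ i)
    _ ≤ ∑ j, c j - A := by rw [sum_sub_distrib]; linarith

section Clustering

variable {d : ℕ} {z : ℝ} {w : Pt d → ℝ} {S : Finset (Pt d)}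

lemma cCost_singleton (q : Pt d) : cCost z w S {q} = ∑ p ∈ S, w p * dist p q ^ z := by
  unfold cCost
  refine sum_congr rfl fun p _ => ?_
  rw [coe_singleton, Set.image_singleton, csInf_singleton]

lemma cCost_pair (q q' : Pt d) :
    cCost z w S {q, q'} = ∑ p ∈ S, w p * min (dist p q) (dist p q') ^ z := by
  unfold cCost
  refine sum_congr rfl fun p _ => ?_
  rw [coe_insert, coe_singleton, Set.image_pair, csInf_pair]

lemma cCost_pair_add_le_cCost_singleton (hz : 0 < z) (hw : ∀ p ∈ S, 0 ≤ w p) (q : Pt d)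
    {p₀ : Pt d} (hp₀ : p₀ ∈ S) :
    cCost z w S {q, p₀} + w p₀ * dist p₀ q ^ z ≤ cCost z w S {q} := by
  rw [cCost_pair, cCost_singleton, ← add_sum_erase _ _ hp₀, ← add_sum_erase _ _ hp₀,
    dist_self, min_eq_right (dist_nonneg (x := p₀) (y := q)), Real.zero_rpow hz.ne', mul_zero,
    zero_add, add_comm]
  gcongr with p hp
  · exact hw p (mem_of_mem_erase hp)
  · exact min_le_left _ _

end Clustering

theorem corollary3_general {d : ℕ} (z : ℝ) (hz : 0 < z)
    (P : Finset (Pt d)) (hP : P.Nonempty)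
    (w : Pt d → ℝ) (hw : ∀ p ∈ P, 0 < w p)
    (k : ℕ) (hk : 0 < k)
    (Pc : Fin k → Finset (Pt d))
    (hne : ∀ i, (Pc i).Nonempty)
    (hdisj : ∀ i j, i ≠ j → Disjoint (Pc i) (Pc j))
    (hcover : P = Finset.univ.biUnion Pc)
    (μ : Fin k → Pt d)
    (pstar : Fin k → Pt d) (hpstarM : ∀ i, pstar i ∈ Pc i)
    (hpstar : ∀ i, ∀ p ∈ Pc i,
      w p * dist p (μ i) ^ z ≤ w (pstar i) * dist (pstar i) (μ i) ^ z)
    (A : ℝ) (a : Fin k → ℝ)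
    (hA : A ≤ ∑ i, a i)
    (ha : ∀ i, a i ≤ cCost z w (Pc i) {μ i, pstar i})
    (ρ : ℝ) (hρ : 0 < ρ)
    (ε : ℝ)
    (hεdef : ε = ρ * (((∑ i, cCost z w (Pc i) {μ i}) - A) / P.inf' hP w) ^ (1 / z))
    (X : Type*) (cost : Pt d → X → ℝ)
    (hc1 : ∀ p x, 1 ≤ cost p x)
    (hlip : ∀ (x : X) (p p' : Pt d), |cost p x - cost p' x| ≤ ρ * dist p p') :
    ∀ x : X,
      ((1 - ε) * (∑ p ∈ P, w p * cost p x) ≤ (∑ i, (∑ p ∈ Pc i, w p) * cost (μ i) x) ∧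
       (∑ i, (∑ p ∈ Pc i, w p) * cost (μ i) x) ≤ (1 + ε) * (∑ p ∈ P, w p * cost p x)) ∧
      ((1 - ε) * P.sup' hP (fun p => cost p x)
          ≤ Finset.univ.sup' (Finset.univ_nonempty_iff.mpr ⟨⟨0, hk⟩⟩) (fun i => cost (μ i) x) ∧
       Finset.univ.sup' (Finset.univ_nonempty_iff.mpr ⟨⟨0, hk⟩⟩) (fun i => cost (μ i) x)
          ≤ (1 + ε) * P.sup' hP (fun p => cost p x)) := by
  have hsub : ∀ i, Pc i ⊆ P := fun i => hcover ▸ subset_biUnion_of_mem Pc (mem_univ i)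
  have hw0 : ∀ p ∈ P, 0 ≤ w p := fun p hp => (hw p hp).le
  have hwmin : 0 < P.inf' hP w := (lt_inf'_iff hP).2 hw
  have hfar0 : ∀ i, 0 ≤ w (pstar i) * dist (pstar i) (μ i) ^ z := fun i =>
    mul_nonneg (hw0 _ (hsub i (hpstarM i))) (Real.rpow_nonneg dist_nonneg _)
  have hfar : ∀ i, w (pstar i) * dist (pstar i) (μ i) ^ z ≤ (∑ i, cCost z w (Pc i) {μ i}) - A :=
    le_sum_sub_of_le_sub hfar0 (fun i => by
      linarith [ha i, cCost_pair_add_le_cCost_singleton hz (fun p hp => hw0 p (hsub i hp))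
        (μ i) (hpstarM i)]) hA
  have hε : 0 ≤ ε := hεdef ▸ mul_nonneg hρ.le
    (Real.rpow_nonneg (div_nonneg ((hfar0 ⟨0, hk⟩).trans (hfar _)) hwmin.le) _)
  have hclose : ∀ x i, ∀ p ∈ Pc i, |cost (μ i) x - cost p x| ≤ ε := fun x i p hp =>
    calc |cost (μ i) x - cost p x| ≤ ρ * dist p (μ i) := dist_comm (μ i) p ▸ hlip x _ _
      _ ≤ ε := hεdef ▸ mul_le_mul_of_nonneg_left (le_div_rpow_inv_of_mul_rpow_le_s9 hz hwmin
          (inf'_le w (hsub i hp)) dist_nonneg ((hpstar i p hp).trans (hfar i))) hρ.le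
  have hlower : ∀ x i, ∀ p ∈ Pc i, (1 - ε) * cost p x ≤ cost (μ i) x := fun x i p hp =>
    one_sub_mul_le_of_abs_sub_le (hc1 p x) hε (hclose x i p hp)
  have hupper : ∀ x i, ∀ p ∈ Pc i, cost (μ i) x ≤ (1 + ε) * cost p x := fun x i p hp =>
    le_one_add_mul_of_abs_sub_le (hc1 p x) hε (hclose x i p hp)
  have hcover' : ∀ p ∈ P, ∃ i, p ∈ Pc i := fun p hp => by
    obtain ⟨i, -, hpi⟩ := mem_biUnion.1 (hcover ▸ hp)
    exact ⟨i, hpi⟩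
  intro x
  exact ⟨⟨mul_sum_le_sum_clusterWeight_mul hdisj hcover hw0 (hlower x),
      sum_clusterWeight_mul_le_mul_sum hdisj hcover hw0 (hupper x)⟩,
    mul_sup'_le_sup'_of_cover hP _ hcover' (hlower x),
    sup'_le_mul_sup'_of_subset hP _ hsub hne (by linarith) (hupper x)⟩

/-- Corollary 3: with the suboptimal-clustering data of Theorem 2 and
`ε := ρ·((Σ_i c(Pc i,{μ i}) − A)/w_min)^{1/z}`, for every model set `X` and every
per-point cost that is `≥ 1` and `ρ`-Lipschitz in the point, `{μ i}` with weights
`Σ_{p∈Pc i} w_p` is an `ε`-coreset for `P` w.r.t. the sum cost and the maximum cost. -/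
theorem corollary3 {d : ℕ} (z : ℝ) (hz : 0 < z)
    (P : Finset (Pt d)) (hP : P.Nonempty)
    (w : Pt d → ℝ) (hw : ∀ p ∈ P, 0 < w p)
    (k : ℕ) (hk : 0 < k)
    (Pc : Fin k → Finset (Pt d))
    (hne : ∀ i, (Pc i).Nonempty)
    (hdisj : ∀ i j, i ≠ j → Disjoint (Pc i) (Pc j))
    (hcover : P = Finset.univ.biUnion Pc)
    (μ : Fin k → Pt d) (hμ : ∀ i, cCost z w (Pc i) {μ i} = optCost z w (Pc i) 1)
    (pstar : Fin k → Pt d) (hpstarM : ∀ i, pstar i ∈ Pc i)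
    (hpstar : ∀ i, ∀ p ∈ Pc i,
      w p * dist p (μ i) ^ z ≤ w (pstar i) * dist (pstar i) (μ i) ^ z)
    (A : ℝ) (a : Fin k → ℝ)
    (hA : A ≤ ∑ i, a i)
    (ha : ∀ i, a i ≤ cCost z w (Pc i) {μ i, pstar i})
    (ρ : ℝ) (hρ : 0 < ρ)
    (ε : ℝ)
    (hεdef : ε = ρ * (((∑ i, cCost z w (Pc i) {μ i}) - A) / P.inf' hP w) ^ (1 / z))
    (X : Type*) (cost : Pt d → X → ℝ)
    (hc1 : ∀ p x, 1 ≤ cost p x)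
    (hlip : ∀ (x : X) (p p' : Pt d), |cost p x - cost p' x| ≤ ρ * dist p p') :
    ∀ x : X,
      ((1 - ε) * (∑ p ∈ P, w p * cost p x) ≤ (∑ i, (∑ p ∈ Pc i, w p) * cost (μ i) x) ∧
       (∑ i, (∑ p ∈ Pc i, w p) * cost (μ i) x) ≤ (1 + ε) * (∑ p ∈ P, w p * cost p x)) ∧
      ((1 - ε) * P.sup' hP (fun p => cost p x)
          ≤ Finset.univ.sup' (Finset.univ_nonempty_iff.mpr ⟨⟨0, hk⟩⟩) (fun i => cost (μ i) x) ∧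
       Finset.univ.sup' (Finset.univ_nonempty_iff.mpr ⟨⟨0, hk⟩⟩) (fun i => cost (μ i) x)
          ≤ (1 + ε) * P.sup' hP (fun p => cost p x)) :=
  corollary3_general z hz P hP w hw k hk Pc hne hdisj hcover μ pstar hpstarM hpstar A a hA ha ρ hρ ε
    hεdef X cost hc1 hlip
end
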